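/- arXiv:2507.13040 — 2 statements merged into one kernel-verified Lean document; each statement's English description precedes it below -/
import Mathlib

section
/- Suppose H : [0, δ) → ℝ is continuous with H(0) = 0, and there exist continuous functions a, ξ : [0, δ) → ℝ with a > 0 and ξ ≥ 0 such that H is differentiable and a(t)·H′(t) ≤ ∫₀ᵗ H(s)·ξ(s) ds for all t ∈ [0, δ), and H(t) ≥ 0 for all t. Then H ≡ 0 on [0, δ). -/
open Real Set intervalIntegral

private lemma mvt_le_aux (g g' : ℝ → ℝ) (t C : ℝ) (ht : 0 ≤ t)
    (hc : ContinuousOn g (Icc 0 t))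
    (hd : ∀ s ∈ Icc 0 t, HasDerivAt g (g' s) s)
    (hb : ∀ s ∈ Icc 0 t, g' s ≤ C) : g t ≤ g 0 + C * t := by
  have hmono : MonotoneOn (fun s => C * s - g s) (Icc 0 t) := by
    apply monotoneOn_of_deriv_nonneg (convex_Icc 0 t)
    · exact (continuousOn_const.mul continuousOn_id).sub hc
    · intro x hx
      have hx' : x ∈ Icc 0 t := interior_subset hx
      have hder : HasDerivAt (fun s => C * s - g s) (C * 1 - g' x) x :=
        ((hasDerivAt_id x).const_mul C).sub (hd x hx')
      exact hder.differentiableAt.differentiableWithinAt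
    · intro x hx
      have hx' : x ∈ Icc 0 t := interior_subset hx
      have hder : HasDerivAt (fun s => C * s - g s) (C * 1 - g' x) x :=
        ((hasDerivAt_id x).const_mul C).sub (hd x hx')
      rw [hder.deriv]
      have := hb x hx'
      nlinarith
  have h := hmono ⟨le_rfl, ht⟩ ⟨ht, le_rfl⟩ ht
  simp only [mul_zero] at h
  linarith

theorem stmt_11 (δ : ℝ) (hδ : 0 < δ) (H H' a ξ : ℝ → ℝ)
    (hHc : ContinuousOn H (Ico 0 δ)) (hH0 : H 0 = 0)
    (hac : ContinuousOn a (Ico 0 δ)) (hξc : ContinuousOn ξ (Ico 0 δ))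
    (hapos : ∀ t ∈ Ico (0 : ℝ) δ, 0 < a t)
    (hξpos : ∀ t ∈ Ico (0 : ℝ) δ, 0 ≤ ξ t)
    (hderiv : ∀ t ∈ Ico (0 : ℝ) δ, HasDerivAt H (H' t) t)
    (hineq : ∀ t ∈ Ico (0 : ℝ) δ, a t * H' t ≤ ∫ s in (0 : ℝ)..t, H s * ξ s)
    (hHnonneg : ∀ t ∈ Ico (0 : ℝ) δ, 0 ≤ H t) :
    ∀ t ∈ Ico (0 : ℝ) δ, H t = 0 := by
  intro t₀ ht₀
  set T : ℝ := (t₀ + δ) / 2 with hTdef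
  have hT0 : 0 < T := by have := ht₀.1; have := ht₀.2; unfold T; linarith
  have hTδ : T < δ := by have := ht₀.2; unfold T; linarith
  have ht₀T : t₀ ≤ T := by have := ht₀.2; unfold T; linarith
  have hsub : Icc (0:ℝ) T ⊆ Ico 0 δ := fun x hx => ⟨hx.1, lt_of_le_of_lt hx.2 hTδ⟩
  have hHcT : ContinuousOn H (Icc 0 T) := hHc.mono hsub
  have hξcT : ContinuousOn ξ (Icc 0 T) := hξc.mono hsub
  -- integrability of H on subintervals
  have HInt : ∀ t ∈ Icc (0:ℝ) T, IntervalIntegrable H MeasureTheory.volume 0 t := by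
    intro t ht
    apply (hHcT.mono _).intervalIntegrable
    rw [uIcc_of_le ht.1]
    exact Icc_subset_Icc le_rfl ht.2
  set F : ℝ → ℝ := fun t => ∫ s in (0:ℝ)..t, H s with hFdef
  have Fnonneg : ∀ t ∈ Icc (0:ℝ) T, 0 ≤ F t := by
    intro t ht
    exact intervalIntegral.integral_nonneg ht.1 fun s hs =>
      hHnonneg s (hsub ⟨hs.1, hs.2.trans ht.2⟩)
  have Fmono : ∀ t₁ ∈ Icc (0:ℝ) T, ∀ t₂ ∈ Icc (0:ℝ) T, t₁ ≤ t₂ → F t₁ ≤ F t₂ := by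
    intro t₁ ht₁ t₂ ht₂ h12
    have hi1 : IntervalIntegrable H MeasureTheory.volume 0 t₁ := HInt t₁ ht₁
    have hi2 : IntervalIntegrable H MeasureTheory.volume t₁ t₂ := by
      apply (hHcT.mono _).intervalIntegrable
      rw [uIcc_of_le h12]
      exact Icc_subset_Icc ht₁.1 ht₂.2
    have hsplit : F t₁ + ∫ s in t₁..t₂, H s = F t₂ :=
      intervalIntegral.integral_add_adjacent_intervals hi1 hi2
    have hpos : 0 ≤ ∫ s in t₁..t₂, H s :=
      intervalIntegral.integral_nonneg h12 fun s hs =>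
        hHnonneg s (hsub ⟨ht₁.1.trans hs.1, hs.2.trans ht₂.2⟩)
    linarith
  -- min of a, max of ξ
  obtain ⟨xa, hxa, haMin⟩ := isCompact_Icc.exists_isMinOn (nonempty_Icc.2 hT0.le)
    (hac.mono hsub)
  obtain ⟨xξ, hxξ, hξMax⟩ := isCompact_Icc.exists_isMaxOn (nonempty_Icc.2 hT0.le)
    (hξc.mono hsub)
  set α : ℝ := a xa with hαdef
  set Ξ : ℝ := ξ xξ with hΞdef
  have hα : 0 < α := hapos xa (hsub hxa)
  have hΞ : 0 ≤ Ξ := hξpos xξ (hsub hxξ)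
  set K : ℝ := Ξ / α * T with hKdef
  have hK0 : 0 ≤ K := mul_nonneg (div_nonneg hΞ hα.le) hT0.le
  -- Step A : bound on H'
  have stepA : ∀ t ∈ Icc (0:ℝ) T, H' t ≤ Ξ / α * F t := by
    intro t ht
    have htδ : t ∈ Ico (0:ℝ) δ := hsub ht
    have hicc : Icc (0:ℝ) t ⊆ Icc 0 T := Icc_subset_Icc le_rfl ht.2
    have hi1 : IntervalIntegrable (fun s => H s * ξ s) MeasureTheory.volume 0 t := by
      have hc : ContinuousOn (fun s => H s * ξ s) (uIcc 0 t) := by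
        rw [uIcc_of_le ht.1]; exact (hHcT.mono hicc).mul (hξcT.mono hicc)
      exact hc.intervalIntegrable
    have hi2 : IntervalIntegrable (fun s => H s * Ξ) MeasureTheory.volume 0 t := by
      have hc : ContinuousOn (fun s => H s * Ξ) (uIcc 0 t) := by
        rw [uIcc_of_le ht.1]; exact (hHcT.mono hicc).mul continuousOn_const
      exact hc.intervalIntegrable
    have h1 : (∫ s in (0:ℝ)..t, H s * ξ s) ≤ ∫ s in (0:ℝ)..t, H s * Ξ := by
      apply intervalIntegral.integral_mono_on ht.1 hi1 hi2
      intro s hs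
      exact mul_le_mul_of_nonneg_left (hξMax (hicc hs)) (hHnonneg s (hsub (hicc hs)))
    have h2 : (∫ s in (0:ℝ)..t, H s * Ξ) = F t * Ξ := intervalIntegral.integral_mul_const Ξ H
    have h3 : a t * H' t ≤ Ξ * F t := by
      have := hineq t htδ
      rw [h2] at h1
      linarith
    have hat : 0 < a t := hapos t htδ
    have hαat : α ≤ a t := haMin ht
    have hnum : 0 ≤ Ξ * F t := mul_nonneg hΞ (Fnonneg t ht)
    have h4 : H' t ≤ Ξ * F t / a t := (le_div_iff₀' hat).2 h3
    have h5 : Ξ * F t / a t ≤ Ξ * F t / α := by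
      apply div_le_div_of_nonneg_left hnum hα hαat
    calc H' t ≤ Ξ * F t / a t := h4
      _ ≤ Ξ * F t / α := h5
      _ = Ξ / α * F t := by ring
  -- Step B : H t ≤ K * F t
  have stepB : ∀ t ∈ Icc (0:ℝ) T, H t ≤ K * F t := by
    intro t ht
    have hicc : Icc (0:ℝ) t ⊆ Icc 0 T := Icc_subset_Icc le_rfl ht.2
    set C : ℝ := Ξ / α * F t with hCdef
    have hC0 : 0 ≤ C := mul_nonneg (div_nonneg hΞ hα.le) (Fnonneg t ht)
    have hmvt : H t ≤ H 0 + C * t := by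
      apply mvt_le_aux H H' t C ht.1 (hHcT.mono hicc)
        (fun s hs => hderiv s (hsub (hicc hs)))
      intro s hs
      calc H' s ≤ Ξ / α * F s := stepA s (hicc hs)
        _ ≤ Ξ / α * F t := by
            exact mul_le_mul_of_nonneg_left (Fmono s (hicc hs) t ht hs.2)
              (div_nonneg hΞ hα.le)
    have hct : C * t ≤ C * T := mul_le_mul_of_nonneg_left ht.2 hC0
    have : C * T = K * F t := by rw [hCdef, hKdef]; ring
    rw [hH0] at hmvt
    linarith
  -- Step C : Gronwall implies F ≡ 0 on [0, T]
  have FcontT : ContinuousOn F (Icc 0 T) := by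
    have := intervalIntegral.continuousOn_primitive_interval'
      (μ := MeasureTheory.volume) (f := H) (b₁ := (0:ℝ)) (b₂ := T)
      (HInt T ⟨hT0.le, le_rfl⟩) (by rw [uIcc_of_le hT0.le]; exact ⟨le_rfl, hT0.le⟩)
    rwa [uIcc_of_le hT0.le] at this
  have Fderiv : ∀ x ∈ Ico (0:ℝ) T, HasDerivWithinAt F (H x) (Ici x) x := by
    intro x hx
    have hxδ : x ∈ Ico (0:ℝ) δ := ⟨hx.1, hx.2.trans hTδ⟩
    have hmem : Ico (0:ℝ) δ ∈ nhdsWithin x (Ioi x) := by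
      have h1 : Iio δ ∈ nhdsWithin x (Ioi x) :=
        mem_nhdsWithin_of_mem_nhds (Iio_mem_nhds hxδ.2)
      have h2 : Ioi x ∈ nhdsWithin x (Ioi x) := self_mem_nhdsWithin
      filter_upwards [h1, h2] with y hy1 hy2
      exact ⟨hxδ.1.trans hy2.le, hy1⟩
    have hmeas : StronglyMeasurableAtFilter H (nhdsWithin x (Ioi x)) :=
      ⟨Ico 0 δ, hmem, hHc.aestronglyMeasurable measurableSet_Ico⟩
    have hcont : ContinuousWithinAt H (Ioi x) x :=
      (hHc x hxδ).mono_of_mem_nhdsWithin hmem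
    exact intervalIntegral.integral_hasDerivWithinAt_right
      (HInt x ⟨hx.1, hx.2.le⟩) hmeas hcont
  have Fzero : ∀ x ∈ Icc (0:ℝ) T, F x = 0 := by
    intro x hx
    have := norm_le_gronwallBound_of_norm_deriv_right_le (f := F) (f' := H)
      (δ := 0) (K := K) (ε := 0) (a := 0) (b := T) FcontT Fderiv
      (by simp [hFdef]) ?_ x hx
    · rw [gronwallBound_ε0_δ0] at this
      have h0 : ‖F x‖ = F x := Real.norm_of_nonneg (Fnonneg x hx)
      rw [h0] at this
      exact le_antisymm this (Fnonneg x hx)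
    · intro y hy
      have hy' : y ∈ Icc (0:ℝ) T := ⟨hy.1, hy.2.le⟩
      rw [Real.norm_of_nonneg (hHnonneg y (hsub hy')),
        Real.norm_of_nonneg (Fnonneg y hy'), add_zero]
      exact stepB y hy'
  -- Conclusion
  have ht₀' : t₀ ∈ Icc (0:ℝ) T := ⟨ht₀.1, ht₀T⟩
  have := stepB t₀ ht₀'
  rw [Fzero t₀ ht₀', mul_zero] at this
  exact le_antisymm this (hHnonneg t₀ ht₀)
end

section
/- Let h, ξ : [0, δ) → ℝ be continuous with ξ ≥ 0, and let H : [0, δ) → ℝ be C¹ with H(0) = 0 and H′(t)·a(t) ≤ ∫₀ᵗ ξ(s) H(s) ds for all t, where a : [0,δ) → ℝ is continuous and bounded below by a₀ > 0. Then H(t) ≤ 0 for all t ∈ [0, δ). -/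
open Real Set intervalIntegral

/-- Helper: if `H` is differentiable on `Icc x y` with derivative bounded above by `C`
on the open interval, then `H y - H x ≤ C * (y - x)`. -/
lemma aux_mvt (H : ℝ → ℝ) (x y C : ℝ) (hxy : x ≤ y)
    (hd : ∀ t ∈ Icc x y, HasDerivAt H (deriv H t) t)
    (hC : ∀ t ∈ Ioo x y, deriv H t ≤ C) :
    H y - H x ≤ C * (y - x) := by
  set G : ℝ → ℝ := fun u => H u - C * u with hG
  have hdG : ∀ t ∈ Icc x y, HasDerivAt G (deriv H t - C) t := by
    intro t ht
    have h := (hd t ht).sub ((hasDerivAt_id t).const_mul C)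
    rw [mul_one] at h
    exact h
  have hcont : ContinuousOn G (Icc x y) := fun t ht =>
    ((hdG t ht).continuousAt).continuousWithinAt
  have hint : interior (Icc x y) = Ioo x y := interior_Icc
  have hdiff : DifferentiableOn ℝ G (interior (Icc x y)) := by
    rw [hint]
    exact fun t ht => ((hdG t (Ioo_subset_Icc_self ht)).differentiableAt).differentiableWithinAt
  have hnonpos : ∀ t ∈ interior (Icc x y), deriv G t ≤ 0 := by
    rw [hint]
    intro t ht
    have : deriv G t = deriv H t - C := (hdG t (Ioo_subset_Icc_self ht)).deriv
    rw [this]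
    linarith [hC t ht]
  have hanti : AntitoneOn G (Icc x y) :=
    antitoneOn_of_deriv_nonpos (convex_Icc x y) hcont hdiff hnonpos
  have := hanti (left_mem_Icc.2 hxy) (right_mem_Icc.2 hxy) hxy
  simp only [hG] at this
  nlinarith [this]

theorem stmt_12 (δ a₀ : ℝ) (hδ : 0 < δ) (ha₀ : 0 < a₀) (H a ξ : ℝ → ℝ)
    (hξc : ContinuousOn ξ (Ico 0 δ)) (hξpos : ∀ t ∈ Ico (0 : ℝ) δ, 0 ≤ ξ t)
    (hH : ∀ t ∈ Ico (0 : ℝ) δ, HasDerivAt H (deriv H t) t)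
    (hH' : ContinuousOn (deriv H) (Ico 0 δ))
    (hH0 : H 0 = 0)
    (hac : ContinuousOn a (Ico 0 δ)) (haLB : ∀ t ∈ Ico (0 : ℝ) δ, a₀ ≤ a t)
    (hineq : ∀ t ∈ Ico (0 : ℝ) δ, deriv H t * a t ≤ ∫ s in (0 : ℝ)..t, ξ s * H s) :
    ∀ t ∈ Ico (0 : ℝ) δ, H t ≤ 0 := by
  set F : ℝ → ℝ := fun t => ∫ s in (0 : ℝ)..t, ξ s * H s with hF
  have hHc : ContinuousOn H (Ico 0 δ) := fun t ht =>
    ((hH t ht).continuousAt).continuousWithinAt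
  have hgc : ContinuousOn (fun s => ξ s * H s) (Ico 0 δ) := hξc.mul hHc
  -- integrability on subintervals
  have hgi : ∀ c d : ℝ, 0 ≤ c → c ≤ d → d < δ →
      IntervalIntegrable (fun s => ξ s * H s) MeasureTheory.volume c d := by
    intro c d hc hcd hd
    apply ContinuousOn.intervalIntegrable
    apply hgc.mono
    rw [uIcc_of_le hcd]
    intro u hu
    exact ⟨le_trans hc hu.1, lt_of_le_of_lt hu.2 hd⟩
  -- F is continuous on Icc 0 T for T < δ
  have hFc : ∀ T : ℝ, 0 ≤ T → T < δ → ContinuousOn F (Icc 0 T) := by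
    intro T h0 hT
    have : ContinuousOn F (uIcc 0 T) :=
      continuousOn_primitive_interval' (hgi 0 T le_rfl h0 hT) left_mem_uIcc
    rwa [uIcc_of_le h0] at this
  -- main claim: F ≤ 0 on Ico 0 δ
  have keyF : ∀ t ∈ Ico (0 : ℝ) δ, F t ≤ 0 := by
    by_contra hcon
    push_neg at hcon
    obtain ⟨t₀, ht₀, hFt₀⟩ := hcon
    set S : Set ℝ := {t | t ∈ Ico (0 : ℝ) δ ∧ 0 < F t} with hS
    have hSne : S.Nonempty := ⟨t₀, ht₀, hFt₀⟩
    have hSbdd : BddBelow S := ⟨0, fun s hs => hs.1.1⟩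
    set τ : ℝ := sInf S with hτ
    have hτ0 : 0 ≤ τ := le_csInf hSne fun s hs => hs.1.1
    have hτlt : τ < δ := lt_of_le_of_lt (csInf_le hSbdd ⟨ht₀, hFt₀⟩) ht₀.2
    set T₀ : ℝ := (τ + δ) / 2 with hT₀
    have hτT₀ : τ < T₀ := by simp [hT₀]; linarith
    have hT₀δ : T₀ < δ := by simp [hT₀]; linarith
    have hT₀0 : 0 ≤ T₀ := by linarith
    -- F ≤ 0 strictly before τ
    have hFlt : ∀ u : ℝ, 0 ≤ u → u < τ → F u ≤ 0 := by
      intro u hu huτ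
      by_contra h
      push_neg at h
      exact absurd (csInf_le hSbdd ⟨⟨hu, lt_trans huτ hτlt⟩, h⟩) (not_le.2 huτ)
    -- F τ ≤ 0
    have hFτ : F τ ≤ 0 := by
      rcases eq_or_lt_of_le hτ0 with h0 | h0
      · simp [hF, ← h0]
      · have hcw : ContinuousWithinAt F (Ioo 0 τ) τ := by
          apply (hFc T₀ hT₀0 hT₀δ τ ⟨hτ0, le_of_lt hτT₀⟩).mono
          intro u hu; exact ⟨le_of_lt hu.1, le_trans (le_of_lt hu.2) (le_of_lt hτT₀)⟩
        haveI hne : (nhdsWithin τ (Ioo (0:ℝ) τ)).NeBot := right_nhdsWithin_Ioo_neBot h0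
        refine le_of_tendsto hcw ?_
        filter_upwards [self_mem_nhdsWithin] with u hu
        exact hFlt u (le_of_lt hu.1) hu.2
    -- derivative of H nonpositive wherever F ≤ 0
    have hderiv_nonpos : ∀ u ∈ Ico (0 : ℝ) δ, F u ≤ 0 → deriv H u ≤ 0 := by
      intro u hu hFu
      have h1 := hineq u hu
      have h2 := haLB u hu
      by_contra h
      push_neg at h
      nlinarith [h1, h2, hFu]
    -- H τ ≤ 0
    have hHτ : H τ ≤ 0 := by
      have := aux_mvt H 0 τ 0 hτ0
        (fun t ht => hH t ⟨ht.1, lt_of_le_of_lt ht.2 hτlt⟩)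
        (fun t ht => hderiv_nonpos t ⟨le_of_lt ht.1, lt_trans ht.2 hτlt⟩
          (hFlt t (le_of_lt ht.1) ht.2))
      rw [hH0] at this; linarith
    -- bound K on ξ over Icc 0 T₀
    obtain ⟨K, hK⟩ : ∃ K : ℝ, ∀ u ∈ Icc (0:ℝ) T₀, ‖ξ u‖ ≤ K := by
      apply (isCompact_Icc).exists_bound_of_continuousOn
      exact hξc.mono fun u hu => ⟨hu.1, lt_of_le_of_lt hu.2 hT₀δ⟩
    have hK0 : 0 ≤ K := le_trans (norm_nonneg _) (hK 0 ⟨le_rfl, hT₀0⟩)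
    have hξle : ∀ u ∈ Icc (0:ℝ) T₀, ξ u ≤ K := fun u hu =>
      le_trans (le_abs_self _) (hK u hu)
    -- choose ε
    set ε : ℝ := min (T₀ - τ) (min 1 (a₀ / (2 * (K + 1)))) with hε
    have hεpos : 0 < ε := by
      apply lt_min (by linarith)
      apply lt_min one_pos
      positivity
    have hε1 : ε ≤ 1 := le_trans (min_le_right _ _) (min_le_left _ _)
    have hεa : ε ≤ a₀ / (2 * (K + 1)) := le_trans (min_le_right _ _) (min_le_right _ _)
    have hεT : τ + ε ≤ T₀ := by
      have := min_le_left (T₀ - τ) (min 1 (a₀ / (2 * (K + 1))))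
      linarith
    have hεK : ε * ε * K < a₀ := by
      have h1 : ε * (2 * (K + 1)) ≤ a₀ := (le_div_iff₀ (by positivity)).mp hεa
      nlinarith [mul_nonneg (mul_nonneg hεpos.le hK0) (by linarith : (0:ℝ) ≤ 1 - ε)]
    -- max of F on Icc τ (τ+ε)
    have hsub : Icc τ (τ + ε) ⊆ Icc 0 T₀ := fun u hu =>
      ⟨le_trans hτ0 hu.1, le_trans hu.2 hεT⟩
    have hFcε : ContinuousOn F (Icc τ (τ + ε)) := (hFc T₀ hT₀0 hT₀δ).mono hsub
    obtain ⟨tm, htm, hmax⟩ := (isCompact_Icc).exists_isMaxOn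
      (nonempty_Icc.2 (by linarith)) hFcε
    set M : ℝ := F tm with hM
    have hmax' : ∀ u ∈ Icc τ (τ + ε), F u ≤ M := fun u hu => hmax hu
    -- a point of S strictly between τ and τ + ε
    obtain ⟨s₀, hs₀S, hs₀lt⟩ := exists_lt_of_csInf_lt hSne (show sInf S < τ + ε by linarith)
    have hs₀ge : τ ≤ s₀ := csInf_le hSbdd hs₀S
    have hMpos : 0 < M := lt_of_lt_of_le hs₀S.2 (hmax' s₀ ⟨hs₀ge, le_of_lt hs₀lt⟩)
    -- H bound on Icc τ (τ+ε)
    have hIcoδ : ∀ u ∈ Icc τ (τ + ε), u ∈ Ico (0:ℝ) δ := fun u hu =>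
      ⟨le_trans hτ0 hu.1, lt_of_le_of_lt (le_trans hu.2 hεT) hT₀δ⟩
    have hHbound : ∀ s ∈ Icc τ (τ + ε), H s ≤ ε * M / a₀ := by
      intro s hs
      have hds : ∀ u ∈ Ioo τ s, deriv H u ≤ M / a₀ := by
        intro u hu
        have huI : u ∈ Icc τ (τ + ε) := ⟨le_of_lt hu.1, le_trans (le_of_lt hu.2) hs.2⟩
        have h1 := hineq u (hIcoδ u huI)
        have h2 := haLB u (hIcoδ u huI)
        have h3 : F u ≤ M := hmax' u huI
        rcases le_or_gt (deriv H u) 0 with h | h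
        · exact le_trans h (div_nonneg hMpos.le ha₀.le)
        · rw [le_div_iff₀ ha₀]
          nlinarith
      have := aux_mvt H τ s (M / a₀) hs.1
        (fun t ht => hH t (hIcoδ t ⟨ht.1, le_trans ht.2 hs.2⟩)) hds
      have hsτ : s - τ ≤ ε := by linarith [hs.2]
      have : H s - H τ ≤ M / a₀ * ε := by
        refine le_trans this ?_
        apply mul_le_mul_of_nonneg_left hsτ (div_nonneg hMpos.le ha₀.le)
      have heq : M / a₀ * ε = ε * M / a₀ := by ring
      linarith [hHτ, heq ▸ this]
    -- integral bound
    have hint1 : IntervalIntegrable (fun s => ξ s * H s) MeasureTheory.volume 0 τ :=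
      hgi 0 τ le_rfl hτ0 hτlt
    have hint2 : IntervalIntegrable (fun s => ξ s * H s) MeasureTheory.volume τ tm :=
      hgi τ tm hτ0 htm.1 (lt_of_le_of_lt (le_trans htm.2 hεT) hT₀δ)
    have hsplit : F tm = F τ + ∫ s in τ..tm, ξ s * H s := by
      rw [hF]
      simp only
      rw [← intervalIntegral.integral_add_adjacent_intervals hint1 hint2]
    have hptwise : ∀ u ∈ Icc τ tm, ξ u * H u ≤ K * (ε * M / a₀) := by
      intro u hu
      have huI : u ∈ Icc τ (τ + ε) := ⟨hu.1, le_trans hu.2 htm.2⟩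
      have hξu : 0 ≤ ξ u := hξpos u (hIcoδ u huI)
      have hξuK : ξ u ≤ K := hξle u (hsub huI)
      have hHu : H u ≤ ε * M / a₀ := hHbound u huI
      rcases le_or_gt (H u) 0 with h | h
      · have : ξ u * H u ≤ 0 := mul_nonpos_of_nonneg_of_nonpos hξu h
        exact le_trans this (mul_nonneg hK0 (div_nonneg (mul_nonneg hεpos.le hMpos.le) ha₀.le))
      · calc ξ u * H u ≤ K * H u := mul_le_mul_of_nonneg_right hξuK (le_of_lt h)
          _ ≤ K * (ε * M / a₀) := mul_le_mul_of_nonneg_left hHu hK0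
    have hC0 : 0 ≤ K * (ε * M / a₀) :=
      mul_nonneg hK0 (div_nonneg (mul_nonneg hεpos.le hMpos.le) ha₀.le)
    have hintle : (∫ s in τ..tm, ξ s * H s) ≤ (tm - τ) * (K * (ε * M / a₀)) := by
      have h2 := intervalIntegral.integral_mono_on htm.1 hint2
        (_root_.intervalIntegrable_const (c := K * (ε * M / a₀))) hptwise
      have h3 : (∫ _ in τ..tm, K * (ε * M / a₀)) = (tm - τ) * (K * (ε * M / a₀)) := by
        rw [intervalIntegral.integral_const, smul_eq_mul]
      linarith [h3 ▸ h2]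
    have htmτ : tm - τ ≤ ε := by linarith [htm.2]
    have hfinal : M ≤ ε * (K * (ε * M / a₀)) := by
      have h1 : (tm - τ) * (K * (ε * M / a₀)) ≤ ε * (K * (ε * M / a₀)) :=
        mul_le_mul_of_nonneg_right htmτ hC0
      calc M = F τ + ∫ s in τ..tm, ξ s * H s := hsplit
        _ ≤ 0 + ε * (K * (ε * M / a₀)) := add_le_add hFτ (le_trans hintle h1)
        _ = ε * (K * (ε * M / a₀)) := zero_add _
    have hfin2 : M * a₀ ≤ ε * ε * K * M := by
      rw [show ε * (K * (ε * M / a₀)) = ε * ε * K * M / a₀ by ring] at hfinal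
      rw [le_div_iff₀ ha₀] at hfinal
      linarith
    nlinarith [mul_pos (sub_pos.2 hεK) hMpos]
  -- conclude H ≤ 0
  intro t ht
  have := aux_mvt H 0 t 0 ht.1
    (fun u hu => hH u ⟨hu.1, lt_of_le_of_lt hu.2 ht.2⟩)
    (fun u hu => by
      have huI : u ∈ Ico (0:ℝ) δ := ⟨le_of_lt hu.1, lt_trans hu.2 ht.2⟩
      have h1 := hineq u huI
      have h2 := haLB u huI
      have h3 := keyF u huI
      by_contra h
      push_neg at h
      nlinarith)
  rw [hH0] at this; linarith
end
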